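/- Let n ≥ 5 and let C be the (n−1)×(n−1) circulant matrix circ(1,0,…,0,1). Then X = 2(CCᵀ + I_{n−1})⁻¹((n−1)I_{n−1} − J_{n−1}) equals the circulant matrix circ(b_0, b_1, …, b_{n−2}) where, for 0 ≤ j ≤ n−2, b_j = −2/5 + (2^{n−j}(n−1)/√5) · [ (−3+√5)^j / (2^{n−1} − (−3+√5)^{n−1}) − (−3−√5)^j / (2^{n−1} − (−3−√5)^{n−1}) ]. -/

import Mathlib

open Matrix

noncomputable section

/-- The circulant matrix of order `m` with defining vector `v`:
its `(i,j)` entry is `v ((j - i) mod m)`. -/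
def circ {m : ℕ} (v : Fin m → ℝ) : Matrix (Fin m) (Fin m) ℝ :=
  Matrix.of fun i j => v (j - i)

/-- The `m × m` all-ones matrix. -/
def Jmat (m : ℕ) : Matrix (Fin m) (Fin m) ℝ := Matrix.of fun _ _ => 1

/-!
Put `P = n - 1` and `b_j = -2/5 + (2P/√5) (g_φ(j) - g_ψ(j))`, where `g_r(j) = r^j / (1 - r^P)` and
`φ, ψ = (-3 ± √5)/2` are the roots of `r² + 3r + 1`; this is the claimed vector, since
`2^(n-j) (-3 ± √5)^j / (2^P - (-3 ± √5)^P) = 2 g(j)`.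
The matrix `A = C Cᵀ + 1 = circ(3, 1, 0, …, 0, 1)` is positive definite, so it suffices to show
`A circ(b) = 2 (P I - J)`, i.e. `3 b_d + b_(d-1) + b_(d+1) = 2P δ_(d,0) - 2` with indices mod `P`.
Each `g_r` satisfies the three-term recurrence and `g_r(j + P) = g_r(j) - r^j`, so cyclically
`3 g_r(d) + g_r(d-1) + g_r(d+1) = (3 + r) δ_(d,0) + δ_(d,-1)`; subtracting the two roots leaves
`(φ - ψ) δ_(d,0) = √5 δ_(d,0)`.
-/

section Circulant

variable {m : ℕ}

lemma circ_add (u w : Fin m → ℝ) : circ (u + w) = circ u + circ w := rfl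

lemma circ_sub (u w : Fin m → ℝ) : circ (u - w) = circ u - circ w := rfl

lemma circ_smul (c : ℝ) (u : Fin m → ℝ) : circ (c • u) = c • circ u := rfl

lemma circ_one : circ (1 : Fin m → ℝ) = Jmat m := rfl

variable [NeZero m]

lemma circ_single_zero : circ (Pi.single 0 1 : Fin m → ℝ) = 1 := by
  ext i j
  simp [circ, Matrix.one_apply, Pi.single_apply, sub_eq_zero, eq_comm]

lemma transpose_circ (v : Fin m → ℝ) : (circ v)ᵀ = circ fun k => v (-k) := by
  ext i j
  simp [circ]

lemma circ_mul_circ (u w : Fin m → ℝ) :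
    circ u * circ w = circ fun d => ∑ k, u k * w (d - k) := by
  ext i j
  simp only [circ, Matrix.mul_apply, Matrix.of_apply]
  exact Fintype.sum_equiv (Equiv.subRight i) _ _ fun k => by simp

lemma circ_three_term_mul_circ (a : ℝ) (v : Fin m → ℝ) :
    circ (a • Pi.single 0 1 + Pi.single 1 1 + Pi.single (-1) 1) * circ v =
      circ fun d => a * v d + v (d - 1) + v (d + 1) := by
  rw [circ_mul_circ]
  congr 1
  funext d
  simp [add_mul, Finset.sum_add_distrib, Pi.single_apply]

lemma circ_single_add_single_mul_transpose_add_one :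
    circ (Pi.single 0 1 + Pi.single (-1) 1 : Fin m → ℝ) *
        (circ (Pi.single 0 1 + Pi.single (-1) 1))ᵀ + 1 =
      circ ((3 : ℝ) • Pi.single 0 1 + Pi.single 1 1 + Pi.single (-1) 1) := by
  rw [transpose_circ, circ_mul_circ, ← circ_single_zero, ← circ_add]
  congr 1
  funext d
  simp only [Pi.add_apply, Pi.smul_apply, Pi.single_apply, add_mul, Finset.sum_add_distrib,
    ite_mul, one_mul, zero_mul, Finset.sum_ite_eq', Finset.mem_univ, if_true, neg_sub,
    sub_eq_zero, zero_sub, neg_inj, sub_eq_self, eq_comm (a := (0 : Fin m)),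
    eq_comm (a := (-1 : Fin m)), smul_eq_mul]
  ring

end Circulant

lemma ite_val_eq_zero_or_last_eq_single_add_single {P : ℕ} [NeZero P] (hP : 2 ≤ P) :
    (fun k : Fin P => if k.val = 0 ∨ k.val = P - 1 then (1 : ℝ) else 0) =
      Pi.single 0 1 + Pi.single (-1) 1 := by
  obtain ⟨Q, rfl⟩ : ∃ Q, P = Q + 2 := ⟨P - 2, by omega⟩
  funext k
  simp only [Pi.add_apply, Pi.single_apply, Fin.ext_iff, Fin.val_zero, Fin.coe_neg_one]
  split_ifs <;> first | omega | norm_num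

lemma isUnit_det_mul_transpose_add_one {ι : Type*} [Fintype ι] [DecidableEq ι]
    (C : Matrix ι ι ℝ) : IsUnit (C * Cᵀ + 1).det := by
  have hpos : (C * Cᵀ + 1).PosDef := by
    simpa using PosDef.posSemidef_add (posSemidef_self_mul_conjTranspose C) PosDef.one
  exact hpos.det_pos.ne'.isUnit

def normalizedPow (r : ℝ) (P j : ℕ) : ℝ := r ^ j / (1 - r ^ P)

section Recurrence

variable {r : ℝ} {P : ℕ}

lemma pow_ne_one_of_sq_add_three_mul_add_one_eq_zero (hr : r ^ 2 + 3 * r + 1 = 0) (hP : P ≠ 0) :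
    r ^ P ≠ 1 := by
  rw [Ne, pow_eq_one_iff_of_ne_zero hP]
  rintro (rfl | ⟨rfl, -⟩) <;> norm_num at hr

lemma normalizedPow_add_period (h : r ^ P ≠ 1) (j : ℕ) :
    normalizedPow r P (P + j) = normalizedPow r P j - r ^ j := by
  have : 1 - r ^ P ≠ 0 := sub_ne_zero.2 h.symm
  unfold normalizedPow
  field_simp
  ring

lemma normalizedPow_recurrence (hr : r ^ 2 + 3 * r + 1 = 0) (j : ℕ) :
    3 * normalizedPow r P (j + 1) + normalizedPow r P j + normalizedPow r P (j + 2) = 0 := by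
  unfold normalizedPow
  linear_combination r ^ j / (1 - r ^ P) * hr

lemma normalizedPow_cyclic (hr : r ^ 2 + 3 * r + 1 = 0) [NeZero P] (hP : 2 ≤ P) (d : Fin P) :
    3 * normalizedPow r P d + normalizedPow r P ↑(d - 1) + normalizedPow r P ↑(d + 1) =
      if d = 0 then 3 + r else if d = -1 then 1 else 0 := by
  obtain ⟨Q, rfl⟩ : ∃ Q, P = Q + 2 := ⟨P - 2, by omega⟩
  have hper := normalizedPow_add_period (P := Q + 2)
    (pow_ne_one_of_sq_add_three_mul_add_one_eq_zero hr (by omega))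
  have hrec := normalizedPow_recurrence (P := Q + 2) hr
  have wrap₀ : normalizedPow r (Q + 2) (Q + 1 + 1) = normalizedPow r (Q + 2) 0 - 1 := by
    simpa using hper 0
  have wrap₁ : normalizedPow r (Q + 2) (Q + 1 + 2) = normalizedPow r (Q + 2) 1 - r := by
    simpa using hper 1
  rw [Fin.coe_sub_one, Fin.val_add_one]
  simp only [Fin.ext_iff, Fin.val_zero, Fin.coe_neg_one, Fin.val_last]
  split_ifs with h₀ _ hlast <;> try omega
  · rw [h₀, zero_add]
    linear_combination hrec (Q + 1) - 3 * wrap₀ - wrap₁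
  · rw [hlast, Nat.add_sub_cancel]
    linear_combination hrec Q - wrap₀
  · obtain ⟨t, ht⟩ : ∃ t, (d : ℕ) = t + 1 := ⟨d - 1, by omega⟩
    rw [ht, Nat.add_sub_cancel]
    exact hrec t

end Recurrence

lemma two_pow_mul_div_eq_normalizedPow (x : ℝ) {P j : ℕ} (hj : j ≤ P) :
    2 ^ (P + 1 - j) * x ^ j / (2 ^ P - x ^ P) = 2 * normalizedPow (x / 2) P j := by
  obtain ⟨k, rfl⟩ := Nat.exists_eq_add_of_le hj
  rw [normalizedPow, div_pow, div_pow, one_sub_div (by positivity), div_div_eq_mul_div,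
    show j + k + 1 - j = k + 1 by omega]
  field_simp
  ring

def wheelVec (P j : ℕ) : ℝ :=
  -2 / 5 + 2 * P / √5 *
    (normalizedPow ((-3 + √5) / 2) P j - normalizedPow ((-3 - √5) / 2) P j)

lemma wheelVec_cyclic {P : ℕ} [NeZero P] (hP : 2 ≤ P) (d : Fin P) :
    3 * wheelVec P d + wheelVec P ↑(d - 1) + wheelVec P ↑(d + 1) =
      if d = 0 then 2 * (P : ℝ) - 2 else -2 := by
  have h5 : √5 ^ 2 = 5 := Real.sq_sqrt (by norm_num)
  have hφ := normalizedPow_cyclic (r := (-3 + √5) / 2) (by linear_combination h5 / 4) hP d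
  have hψ := normalizedPow_cyclic (r := (-3 - √5) / 2) (by linear_combination h5 / 4) hP d
  have hK : 2 * P / √5 * √5 = 2 * P := div_mul_cancel₀ _ (by positivity)
  unfold wheelVec
  split_ifs at hφ hψ ⊢
  · linear_combination 2 * P / √5 * (hφ - hψ) + hK
  all_goals linear_combination 2 * P / √5 * (hφ - hψ)

lemma circ_mul_transpose_add_one_mul_circ_wheelVec {P : ℕ} [NeZero P] (hP : 2 ≤ P) :
    (circ (Pi.single 0 1 + Pi.single (-1) 1 : Fin P → ℝ) *
        (circ (Pi.single 0 1 + Pi.single (-1) 1))ᵀ + 1) * circ (fun j => wheelVec P j) =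
      (2 : ℝ) • ((P : ℝ) • 1 - Jmat P) := by
  rw [circ_single_add_single_mul_transpose_add_one, circ_three_term_mul_circ,
    ← circ_single_zero, ← circ_one, ← circ_smul, ← circ_sub, ← circ_smul]
  congr 1
  funext d
  rw [wheelVec_cyclic hP d]
  simp only [Pi.smul_apply, Pi.sub_apply, Pi.single_apply, Pi.one_apply, smul_eq_mul]
  split_ifs <;> ring

theorem wheel_X_entries (n : ℕ) (hn : 5 ≤ n)
    (C X : Matrix (Fin (n-1)) (Fin (n-1)) ℝ)
    (hC : C = circ (fun k => if k.val = 0 ∨ k.val = n - 2 then (1:ℝ) else 0))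
    (hX : X = (2:ℝ) • ((C * Cᵀ + 1)⁻¹ * (((n:ℝ) - 1) • (1 : Matrix (Fin (n-1)) (Fin (n-1)) ℝ) - Jmat (n-1)))) :
    X = circ (fun j : Fin (n-1) => -2/5 + ((2:ℝ) ^ (n - j.val) * ((n:ℝ) - 1) / Real.sqrt 5) * ((-3 + Real.sqrt 5) ^ j.val / ((2:ℝ) ^ (n-1) - (-3 + Real.sqrt 5) ^ (n-1)) - (-3 - Real.sqrt 5) ^ j.val / ((2:ℝ) ^ (n-1) - (-3 - Real.sqrt 5) ^ (n-1)))) := by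
  have : NeZero (n - 1) := ⟨by omega⟩
  have hP : 2 ≤ n - 1 := by omega
  rw [show n - 2 = n - 1 - 1 by omega, ite_val_eq_zero_or_last_eq_single_add_single hP] at hC
  rw [← Nat.cast_pred (by omega : 0 < n)] at hX ⊢
  rw [hX, hC, ← Matrix.mul_smul, ← circ_mul_transpose_add_one_mul_circ_wheelVec hP,
    nonsing_inv_mul_cancel_left _ _ (isUnit_det_mul_transpose_add_one _)]
  congr 1
  funext j
  have e₁ := two_pow_mul_div_eq_normalizedPow (-3 + √5) j.is_lt.le
  have e₂ := two_pow_mul_div_eq_normalizedPow (-3 - √5) j.is_lt.le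
  rw [show n - 1 + 1 - j = n - j by omega] at e₁ e₂
  unfold wheelVec
  linear_combination -((n - 1 : ℕ) : ℝ) / √5 * (e₁ - e₂)
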